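/- arXiv:2311.18786 — 4 statements merged into one kernel-verified Lean document; each statement's English description precedes it below -/
import Mathlib

section
/- Let k ≥ 3 and let H_k be the (k+1)-vertex graph formed by taking a complete graph on k vertices and adding one new vertex joined by an edge to exactly one vertex of the clique. Then M_{H_k}(n) ≤ 3 for every n ∈ ℕ. -/
/-!
If the first step of the `H_k`-process adds an edge, then `G₁` contains a copy of `H_k`, hence
a `k`-clique `C`. In the second step every vertex `c ∈ C` becomes adjacent to every other vertex
`x`, since `C` with the pendant edge `cx` is a new copy of `H_k`. In the third step every missing
edge `vw` is added: `v`, `w` and `k - 2` vertices of `C` form a `k`-clique of `G₂ + vw`, and a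
remaining vertex of `C` hangs off `v`. So `G₃` is complete and the process stops after at most
three steps.
-/

open SimpleGraph

/-- The number of subgraphs of `G` isomorphic to `H`. -/
noncomputable def numCopies {α β : Type*} (H : SimpleGraph α) (G : SimpleGraph β) : ℕ :=
  {G' : G.Subgraph | Nonempty (G'.coe ≃g H)}.ncard

/-- One step of the `H`-bootstrap process: add every missing edge whose addition
creates a new copy of `H`. -/
noncomputable def bootStep {α β : Type*} (H : SimpleGraph α) (G : SimpleGraph β) :
    SimpleGraph β :=
  G ⊔ SimpleGraph.fromRel (fun u v =>
    numCopies H G < numCopies H (G ⊔ SimpleGraph.fromEdgeSet {s(u, v)}))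

/-- The `H`-bootstrap process `(G_i)_{i ≥ 0}` on the starting graph `G`. -/
noncomputable def bootProcess {α β : Type*} (H : SimpleGraph α) (G : SimpleGraph β) :
    ℕ → SimpleGraph β
  | 0 => G
  | i + 1 => bootStep H (bootProcess H G i)

/-- The running time `τ_H(G)` of the `H`-bootstrap process on `G`. -/
noncomputable def runningTime {α β : Type*} (H : SimpleGraph α) (G : SimpleGraph β) : ℕ :=
  sInf {t | bootProcess H G t = bootProcess H G (t + 1)}

/-- `M_H(n)`, the maximum running time of the `H`-bootstrap process over all
`n`-vertex starting graphs. -/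
noncomputable def maxRunningTime {α : Type*} (H : SimpleGraph α) (n : ℕ) : ℕ :=
  sSup {t | ∃ G : SimpleGraph (Fin n), runningTime H G = t}

/-- The graph `H_k` on `k+1` vertices: a clique on `{0, …, k−1}` together with a pendant
edge from vertex `0` to the extra vertex `k`. -/
def cliqueWithPendant (k : ℕ) : SimpleGraph (Fin (k + 1)) :=
  SimpleGraph.fromRel (fun u v => (u.val < k ∧ v.val < k) ∨ (u.val = 0 ∧ v.val = k))

namespace SimpleGraph

section Bootstrap

variable {α β : Type*} {H : SimpleGraph α} {G G' : SimpleGraph β}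

lemma Subgraph.map_injective {f : G →g G'} (hf : Function.Injective f) :
    Function.Injective (Subgraph.map f) := by
  intro A B h
  ext x y
  · simpa [hf.mem_set_image] using congrArg (f x ∈ ·.verts) h
  · simpa [Relation.map_apply_apply hf hf] using
      congrArg (fun A : G'.Subgraph => A.Adj (f x) (f y)) h

lemma isContained_of_numCopies_pos (h : 0 < numCopies H G) : H ⊑ G := by
  obtain ⟨A, ⟨e⟩⟩ := Set.nonempty_of_ncard_ne_zero h.ne'
  exact isContained_iff_exists_iso_subgraph.2 ⟨A, ⟨e.symm⟩⟩

/-- Pushing copies forward along `G ≤ G'` misses every copy using an edge outside `G`. -/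
lemma numCopies_lt_of_copy [Finite β] (hle : G ≤ G') (f : Copy H G') {a b : α}
    (hab : H.Adj a b) (hG : ¬ G.Adj (f a) (f b)) : numCopies H G < numCopies H G' := by
  let ι := Copy.ofLE G G' hle
  let S : Set G.Subgraph := {A | Nonempty (A.coe ≃g H)}
  have hsub : Subgraph.map ι.toHom '' S ⊆ {A : G'.Subgraph | Nonempty (A.coe ≃g H)} := by
    rintro _ ⟨A, ⟨e⟩, rfl⟩
    exact ⟨e.comp (ι.isoSubgraphMap A).symm⟩
  have hf : f.toSubgraph ∉ Subgraph.map ι.toHom '' S := by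
    rintro ⟨A, -, hA⟩
    have : f.toSubgraph.Adj (f a) (f b) := ⟨a, b, hab, rfl, rfl⟩
    rw [← hA] at this
    obtain ⟨x, y, hxy, rfl, rfl⟩ := this
    exact hG (A.adj_sub hxy)
  calc numCopies H G
      = (Subgraph.map ι.toHom '' S).ncard :=
        (Set.ncard_image_of_injective _ (Subgraph.map_injective ι.injective)).symm
    _ < numCopies H G' :=
        Set.ncard_lt_ncard (hsub.ssubset_of_not_subset fun h =>
          hf (h ⟨f.isoToSubgraph.symm⟩)) (Set.toFinite _)

lemma le_bootStep : G ≤ bootStep H G := le_sup_left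

lemma bootStep_top : bootStep H (⊤ : SimpleGraph β) = ⊤ := top_sup_eq _

lemma bootStep_adj_of_copy [Finite β] {u v : β} (f : Copy H (G ⊔ edge u v)) {a b : α}
    (hab : H.Adj a b) (ha : f a = u) (hb : f b = v) : (bootStep H G).Adj u v := by
  by_cases huv : G.Adj u v
  · exact le_bootStep huv
  have hne : f a ≠ f b := f.injective.ne hab.ne
  have hG : ¬ G.Adj (f a) (f b) := by rwa [ha, hb]
  rw [ha, hb] at hne
  exact Or.inr ⟨hne, Or.inl (numCopies_lt_of_copy le_sup_left f hab hG)⟩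

lemma isContained_bootStep_of_ne [Finite β] (h : bootStep H G ≠ G) : H ⊑ bootStep H G := by
  obtain ⟨u, v, huv⟩ : ∃ u v, (fromRel fun u v =>
      numCopies H G < numCopies H (G ⊔ edge u v)).Adj u v := by
    by_contra! hno
    exact h (sup_eq_left.2 fun u v huv => (hno u v huv).elim)
  have hlt : numCopies H G < numCopies H (G ⊔ edge u v) := by
    rcases huv.2 with h | h
    exacts [h, edge_comm v u ▸ h]
  refine (isContained_of_numCopies_pos (hlt.trans_le' (Nat.zero_le _))).mono_right
    (sup_le le_bootStep ((edge_le_iff _).2 (Or.inr ?_)))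
  exact le_sup_right (b := fromRel _) huv

lemma runningTime_le_of_bootProcess_eq_top {t : ℕ} (h : bootProcess H G t = ⊤) :
    runningTime H G ≤ t :=
  Nat.sInf_le (show bootProcess H G t = bootStep H (bootProcess H G t) by rw [h, bootStep_top])

end Bootstrap

section CliqueWithPendant

variable {k : ℕ} {V : Type*} {G : SimpleGraph V}

@[simp]
lemma cliqueWithPendant_adj_castSucc {i j : Fin k} :
    (cliqueWithPendant k).Adj i.castSucc j.castSucc ↔ i ≠ j := by
  simp only [cliqueWithPendant, fromRel_adj, ne_eq, Fin.ext_iff, Fin.val_castSucc]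
  omega

@[simp]
lemma cliqueWithPendant_adj_castSucc_last {i : Fin k} :
    (cliqueWithPendant k).Adj i.castSucc (Fin.last k) ↔ (i : ℕ) = 0 := by
  simp only [cliqueWithPendant, fromRel_adj, ne_eq, Fin.ext_iff, Fin.val_castSucc, Fin.val_last,
    and_true]
  have := i.isLt
  omega

def cliqueWithPendant.topCopy (k : ℕ) : Copy (⊤ : SimpleGraph (Fin k)) (cliqueWithPendant k) :=
  ⟨⟨Fin.castSucc, cliqueWithPendant_adj_castSucc.2⟩, Fin.castSucc_injective k⟩

def Copy.addPendant [NeZero k] (c : Copy (⊤ : SimpleGraph (Fin k)) G) {x : V}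
    (hx : x ∉ Set.range c) (hadj : G.Adj (c 0) x) : Copy (cliqueWithPendant k) G := by
  refine ⟨⟨Fin.snoc (α := fun _ => V) c x, fun {a b} hab => ?_⟩,
    Fin.snoc_injective_iff.2 ⟨c.injective, hx⟩⟩
  induction a using Fin.lastCases with
  | last =>
    induction b using Fin.lastCases with
    | last => exact absurd rfl hab.ne
    | cast j =>
      obtain rfl : j = 0 := Fin.ext (cliqueWithPendant_adj_castSucc_last.1 hab.symm)
      simpa using hadj.symm
  | cast i =>
    induction b using Fin.lastCases with
    | last =>
      obtain rfl : i = 0 := Fin.ext (cliqueWithPendant_adj_castSucc_last.1 hab)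
      simpa using hadj
    | cast j =>
      simpa using c.toHom.map_adj ((top_adj _ _).2 (cliqueWithPendant_adj_castSucc.1 hab))

@[simp]
lemma Copy.addPendant_castSucc [NeZero k] (c : Copy (⊤ : SimpleGraph (Fin k)) G) {x : V}
    (hx : x ∉ Set.range c) (hadj : G.Adj (c 0) x) (i : Fin k) :
    c.addPendant hx hadj i.castSucc = c i :=
  Fin.snoc_castSucc (α := fun _ => V) ..

@[simp]
lemma Copy.addPendant_last [NeZero k] (c : Copy (⊤ : SimpleGraph (Fin k)) G) {x : V}
    (hx : x ∉ Set.range c) (hadj : G.Adj (c 0) x) : c.addPendant hx hadj (Fin.last k) = x :=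
  Fin.snoc_last (α := fun _ => V) ..

lemma bootStep_cliqueWithPendant_adj_of_clique [Finite V] [NeZero k]
    (c : Copy (⊤ : SimpleGraph (Fin k)) G) (i : Fin k) {x : V} (hx : x ≠ c i) :
    (bootStep (cliqueWithPendant k) G).Adj (c i) x := by
  by_cases hxc : x ∈ Set.range c
  · obtain ⟨j, rfl⟩ := hxc
    exact le_bootStep (c.toHom.map_adj ((top_adj _ _).2 fun h => hx (h ▸ rfl)))
  -- relabel the clique so that `c i` becomes the attachment vertex `0`
  let c' : Copy (⊤ : SimpleGraph (Fin k)) (G ⊔ edge (c i) x) :=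
    (Copy.ofLE _ _ le_sup_left).comp (c.comp (Iso.completeGraph (Equiv.swap 0 i)).toCopy)
  have hc' : ∀ j, c' j = c (Equiv.swap 0 i j) := fun _ => rfl
  have hc'0 : c' 0 = c i := by rw [hc', Equiv.swap_apply_left]
  have hx' : x ∉ Set.range c' := fun ⟨j, hj⟩ => hxc ⟨_, (hc' j).symm.trans hj⟩
  have hadj : (G ⊔ edge (c i) x).Adj (c' 0) x :=
    hc'0 ▸ Or.inr ((edge_adj ..).2 ⟨Or.inl ⟨rfl, rfl⟩, hx.symm⟩)
  exact bootStep_adj_of_copy (c'.addPendant hx' hadj)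
    (cliqueWithPendant_adj_castSucc_last.2 (Fin.val_zero ..))
    ((c'.addPendant_castSucc hx' hadj 0).trans hc'0) (c'.addPendant_last hx' hadj)

lemma bootStep_cliqueWithPendant_eq_top_of_universal [Finite V] (hk : 2 ≤ k) (c : Fin k ↪ V)
    (huniv : ∀ i x, x ≠ c i → G.Adj (c i) x) : bootStep (cliqueWithPendant k) G = ⊤ := by
  classical
  obtain ⟨m, rfl⟩ : ∃ m, k = m + 2 := ⟨k - 2, by omega⟩
  refine eq_top_iff.2 fun v w hvw => ?_
  by_cases hG : G.Adj v w
  · exact le_bootStep hG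
  have hv : ∀ i, c i ≠ v := by rintro i rfl; exact hG (huniv i w hvw.symm)
  have hw : ∀ i, c i ≠ w := by rintro i rfl; exact hG (huniv i v hvw).symm
  -- `σ` moves `c 0, c 1` to `v, w` and fixes the rest of the clique
  let σ : Equiv.Perm V := Equiv.swap (c 0) v * Equiv.swap (c 1) w
  have hσ0 : σ (c 0) = v := by
    simp [σ, Equiv.swap_apply_of_ne_of_ne (c.injective.ne zero_ne_one) (hw 0)]
  have hσ1 : σ (c 1) = w := by
    simp [σ, Equiv.swap_apply_of_ne_of_ne (hw 0).symm hvw.symm]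
  have hσv : σ v = c 0 := by
    simp [σ, Equiv.swap_apply_of_ne_of_ne (hv 1).symm hvw]
  have hσ : ∀ j, j ≠ 0 → j ≠ 1 → σ (c j) = c j := fun j hj0 hj1 => by
    simp [σ, Equiv.swap_apply_of_ne_of_ne (c.injective.ne hj1) (hw j),
      Equiv.swap_apply_of_ne_of_ne (c.injective.ne hj0) (hv j)]
  have hadj_fixed : ∀ i j, i ≠ j → j ≠ 0 → j ≠ 1 → G.Adj (σ (c i)) (σ (c j)) := by
    intro i j hij hj0 hj1
    rw [hσ j hj0 hj1]
    refine (huniv j _ ?_).symm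
    rw [← hσ j hj0 hj1]
    exact (σ.injective.comp c.injective).ne hij
  have hd : ∀ i j, i ≠ j → (G ⊔ edge v w).Adj (σ (c i)) (σ (c j)) := by
    intro i j hij
    by_cases hj : j ≠ 0 ∧ j ≠ 1
    · exact Or.inl (hadj_fixed i j hij hj.1 hj.2)
    by_cases hi : i ≠ 0 ∧ i ≠ 1
    · exact Or.inl (hadj_fixed j i hij.symm hi.1 hi.2).symm
    refine Or.inr ((edge_adj ..).2 ⟨?_, σ.injective.ne (c.injective.ne hij)⟩)
    have : i = 0 ∧ j = 1 ∨ i = 1 ∧ j = 0 := by grind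
    rcases this with ⟨rfl, rfl⟩ | ⟨rfl, rfl⟩
    exacts [Or.inl ⟨hσ0, hσ1⟩, Or.inr ⟨hσ1, hσ0⟩]
  let d : Copy (⊤ : SimpleGraph (Fin (m + 2))) (G ⊔ edge v w) :=
    ⟨⟨fun i => σ (c i), fun h => hd _ _ h⟩, σ.injective.comp c.injective⟩
  have hx : c 0 ∉ Set.range d := fun ⟨j, hj⟩ => hv j (σ.injective (hj.trans hσv.symm))
  have hpend : (G ⊔ edge v w).Adj (d 0) (c 0) := by
    change G.Adj (σ (c 0)) (c 0) ∨ _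
    exact Or.inl (hσ0 ▸ huniv 0 v (hv 0).symm).symm
  exact bootStep_adj_of_copy (d.addPendant hx hpend)
    (cliqueWithPendant_adj_castSucc.2 zero_ne_one)
    ((d.addPendant_castSucc hx hpend 0).trans hσ0) ((d.addPendant_castSucc hx hpend 1).trans hσ1)

lemma runningTime_cliqueWithPendant_le_three [Finite V] (hk : 2 ≤ k) (G : SimpleGraph V) :
    runningTime (cliqueWithPendant k) G ≤ 3 := by
  have : NeZero k := ⟨by omega⟩
  by_cases hG : bootStep (cliqueWithPendant k) G = G
  · exact (Nat.sInf_le (show bootProcess _ G 0 = bootProcess _ G 1 from hG.symm)).trans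
      (Nat.zero_le 3)
  obtain ⟨f⟩ := isContained_bootStep_of_ne hG
  let c := f.comp (cliqueWithPendant.topCopy k)
  exact runningTime_le_of_bootProcess_eq_top <|
    bootStep_cliqueWithPendant_eq_top_of_universal hk c.toEmbedding
      fun i _ hx => bootStep_cliqueWithPendant_adj_of_clique c i hx

end CliqueWithPendant

end SimpleGraph

/-- For `k ≥ 3`, the clique `K_k` with a pendant edge has
`M_{H_k}(n) ≤ 3` for every `n`. -/
theorem maxRunningTime_cliqueWithPendant_le_three (k : ℕ) (hk : 3 ≤ k) (n : ℕ) :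
    maxRunningTime (cliqueWithPendant k) n ≤ 3 :=
  csSup_le ⟨_, ⊥, rfl⟩ fun _ ⟨G, hG⟩ =>
    hG ▸ runningTime_cliqueWithPendant_le_three (by omega) G
end

section
/- For every t ≥ 2 and every n ∈ ℕ, the star T = K_{1,t−1} on t vertices satisfies M_T(n) ≤ t − 1. -/
open SimpleGraph

/-- The star `K_{1,t−1}` on `t` vertices, with centre `0`. -/
def starGraph (t : ℕ) : SimpleGraph (Fin t) :=
  SimpleGraph.fromRel (fun u _ => u.val = 0)

/-!
Adding a missing edge `uv` creates a new copy of the star `K_{1,t-1}` exactly when `u` or `v`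
already has degree at least `t - 2`: such a vertex is the centre of a new star through `uv`, and
otherwise no star can use `uv`, as one of its endpoints would be a centre of degree `t - 1`.
So a bootstrap step joins every vertex of degree `≥ t - 2` to all other vertices. Until the
process stops, the set `D_i` of vertices of degree `≥ t - 2` in `G_i` grows strictly, since a
vertex still missing an edge in `G_{i+1}` was not in `D_i`. Hence `|D_{t-3}| ≥ t - 2`, every
vertex has degree `≥ t - 2` in `G_{t-2}`, and `G_{t-1}` is complete.
-/

namespace SimpleGraph.Subgraph

variable {β : Type*} {G K : SimpleGraph β}

lemma map_ofLE_adj (h : G ≤ K) (G' : G.Subgraph) {a b : β} :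
    (G'.map (Hom.ofLE h)).Adj a b ↔ G'.Adj a b := by
  simp [Relation.Map]

lemma map_ofLE_injective (h : G ≤ K) :
    Function.Injective (Subgraph.map (Hom.ofLE h)) := by
  intro G₁ G₂ heq
  ext a b
  · simpa using congrArg (a ∈ ·.verts) heq
  · simpa only [map_ofLE_adj] using (congrArg (·.Adj a b) heq).to_iff

lemma exists_map_ofLE_eq (h : G ≤ K) (K' : K.Subgraph)
    (hK' : ∀ ⦃a b⦄, K'.Adj a b → G.Adj a b) : ∃ G' : G.Subgraph, G'.map (Hom.ofLE h) = K' := by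
  refine ⟨K'.comap (Hom.ofLE h), ?_⟩
  ext a b
  · simp
  · simpa [Relation.Map] using fun hab => hK' hab

end SimpleGraph.Subgraph

section Copies

variable {α β : Type*} {H : SimpleGraph α} {G K : SimpleGraph β}

lemma numCopies_eq_ncard_of_le (h : G ≤ K) :
    numCopies H G =
      {K' : K.Subgraph | Nonempty (K'.coe ≃g H) ∧ ∀ ⦃a b⦄, K'.Adj a b → G.Adj a b}.ncard := by
  rw [numCopies, ← Set.ncard_image_of_injective _ (Subgraph.map_ofLE_injective h)]
  congr 1
  ext K'
  constructor
  · rintro ⟨G', ⟨e⟩, rfl⟩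
    refine ⟨⟨((Copy.ofLE G K h).isoSubgraphMap G').symm.trans e⟩, fun a b hab => ?_⟩
    exact G'.adj_sub ((Subgraph.map_ofLE_adj h G').1 hab)
  · rintro ⟨⟨e⟩, hK'⟩
    obtain ⟨G', rfl⟩ := Subgraph.exists_map_ofLE_eq h K' hK'
    exact ⟨G', ⟨((Copy.ofLE G K h).isoSubgraphMap G').trans e⟩, rfl⟩

lemma numCopies_lt_iff_of_le [Finite β] (h : G ≤ K) :
    numCopies H G < numCopies H K ↔
      ∃ K' : K.Subgraph, Nonempty (K'.coe ≃g H) ∧ ∃ a b, K'.Adj a b ∧ ¬G.Adj a b := by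
  have hsub : {K' : K.Subgraph | Nonempty (K'.coe ≃g H) ∧ ∀ ⦃a b⦄, K'.Adj a b → G.Adj a b} ⊆
      {K' : K.Subgraph | Nonempty (K'.coe ≃g H)} := fun _ hK' => hK'.1
  rw [numCopies_eq_ncard_of_le h, numCopies]
  constructor
  · intro hlt
    by_contra! hall
    exact hlt.ne (congrArg Set.ncard (Set.ext fun K' => ⟨And.left, fun hK' => ⟨hK', hall K' hK'⟩⟩))
  · rintro ⟨K', hK', a, b, hab, hG⟩
    exact Set.ncard_lt_ncard ⟨hsub, fun hsup => hG ((hsup hK').2 hab)⟩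

end Copies

section Star

variable {β : Type*} {t s : ℕ}

lemma starGraph_adj_iff (a b : Fin t) :
    (_root_.starGraph t).Adj a b ↔ a ≠ b ∧ (a.val = 0 ∨ b.val = 0) := by
  simp [_root_.starGraph]

lemma ncard_neighborSet_starGraph {c : Fin t} (hc : c.val = 0) :
    ((_root_.starGraph t).neighborSet c).ncard = t - 1 := by
  have : (_root_.starGraph t).neighborSet c = {c}ᶜ := by
    ext b
    simp [starGraph_adj_iff, hc, eq_comm]
  rw [this, Set.ncard_compl, Set.ncard_singleton, Nat.card_fin]

/-- Every edge of a star contains its centre, which has degree `t - 1`. -/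
lemma le_ncard_neighborSet_of_adj_of_iso_starGraph [Finite β] {K : SimpleGraph β}
    {K' : K.Subgraph} (e : K'.coe ≃g _root_.starGraph t) {a b : β} (hab : K'.Adj a b) :
    t - 1 ≤ (K.neighborSet a).ncard ∨ t - 1 ≤ (K.neighborSet b).ncard := by
  have hcentre : ∀ c : K'.verts, (e c).val = 0 → t - 1 ≤ (K.neighborSet c).ncard := by
    intro c hc
    calc t - 1 = (K'.coe.neighborSet c).ncard := by
          rw [← ncard_neighborSet_starGraph hc, ← Nat.card_coe_set_eq,
            ← Nat.card_coe_set_eq]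
          exact Nat.card_congr (e.mapNeighborSet c).symm
      _ ≤ (K.neighborSet c).ncard :=
          Set.ncard_le_ncard_of_injOn Subtype.val (fun _ hw => K'.adj_sub hw)
            Subtype.val_injective.injOn
  have hadj : (_root_.starGraph t).Adj (e ⟨a, K'.edge_vert hab⟩) (e ⟨b, K'.edge_vert hab.symm⟩) :=
    e.map_adj_iff.2 hab
  exact ((starGraph_adj_iff _ _).1 hadj).2.imp (hcentre _) (hcentre _)

def starCopy {K : SimpleGraph β} (u : β) (leaf : Fin s → β) (hleaf : Function.Injective leaf)
    (hadj : ∀ i, K.Adj u (leaf i)) : Copy (_root_.starGraph (s + 1)) K where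
  toHom :=
    { toFun := Fin.cons u leaf
      map_rel' := by
        intro a b hab
        induction a using Fin.cases <;> induction b using Fin.cases <;>
          simp_all [starGraph_adj_iff, (hadj _).symm] }
  injective' := Fin.cons_injective_iff.2 ⟨fun ⟨i, hi⟩ => (hadj i).ne hi.symm, hleaf⟩

lemma starCopy_toSubgraph_adj {K : SimpleGraph β} (u : β) (leaf : Fin s → β)
    (hleaf : Function.Injective leaf) (hadj : ∀ i, K.Adj u (leaf i)) (i : Fin s) :
    (starCopy u leaf hleaf hadj).toSubgraph.Adj u (leaf i) :=
  ⟨0, i.succ, by simp [starGraph_adj_iff, (Fin.succ_ne_zero i).symm], rfl, rfl⟩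

lemma ncard_neighborSet_sup_edge_le [Finite β] (G : SimpleGraph β) (u v : β) :
    ((G ⊔ edge u v).neighborSet u).ncard ≤ (G.neighborSet u).ncard + 1 := by
  refine (Set.ncard_le_ncard (t := insert v (G.neighborSet u)) ?_).trans (Set.ncard_insert_le _ _)
  rintro w (hw | hw)
  · exact Set.mem_insert_of_mem _ hw
  · simp only [edge_adj] at hw
    grind

lemma numCopies_starGraph_lt_sup_edge [Finite β] {G : SimpleGraph β} {u v : β} (ht : 2 ≤ t)
    (huv : u ≠ v) (hnadj : ¬G.Adj u v) (hdeg : t - 2 ≤ (G.neighborSet u).ncard) :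
    numCopies (_root_.starGraph t) G < numCopies (_root_.starGraph t) (G ⊔ edge u v) := by
  obtain ⟨r, rfl⟩ := Nat.exists_eq_add_of_le' ht
  have hr : r ≤ Nat.card (G.neighborSet u) := by simpa [Nat.card_coe_set_eq] using hdeg
  let g : Fin r ↪ G.neighborSet u := (Fin.castLEEmb hr).trans (Finite.equivFin _).symm.toEmbedding
  let leaf : Fin (r + 1) → β := Fin.cons v (fun i => g i)
  have hleaf : Function.Injective leaf := Fin.cons_injective_iff.2
    ⟨fun ⟨i, hi⟩ => hnadj (hi ▸ (g i).2), Subtype.val_injective.comp g.injective⟩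
  have hadj : ∀ i, (G ⊔ edge u v).Adj u (leaf i) :=
    Fin.cases (Or.inr ((edge_adj ..).2 ⟨Or.inl ⟨rfl, rfl⟩, huv⟩)) fun i => Or.inl (g i).2
  rw [numCopies_lt_iff_of_le le_sup_left]
  exact ⟨_, ⟨(starCopy u leaf hleaf hadj).isoToSubgraph.symm⟩, u, v,
    starCopy_toSubgraph_adj u leaf hleaf hadj 0, hnadj⟩

lemma numCopies_starGraph_sup_edge_le [Finite β] {G : SimpleGraph β} {u v : β}
    (hu : (G.neighborSet u).ncard < t - 2) (hv : (G.neighborSet v).ncard < t - 2) :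
    numCopies (_root_.starGraph t) (G ⊔ edge u v) ≤ numCopies (_root_.starGraph t) G := by
  refine not_lt.1 fun hlt => ?_
  obtain ⟨K', ⟨e⟩, a, b, hab, hG⟩ := (numCopies_lt_iff_of_le le_sup_left).1 hlt
  have hsmall : ∀ w ∈ ({u, v} : Set β), ((G ⊔ edge u v).neighborSet w).ncard < t - 1 := by
    rintro w (rfl | rfl)
    · have := ncard_neighborSet_sup_edge_le G w v
      omega
    · have := ncard_neighborSet_sup_edge_le G w u
      rw [edge_comm]
      omega
  have hends : a ∈ ({u, v} : Set β) ∧ b ∈ ({u, v} : Set β) := by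
    have := (K'.adj_sub hab).resolve_left hG
    simp only [edge_adj] at this
    grind
  rcases le_ncard_neighborSet_of_adj_of_iso_starGraph e hab with h | h
  · exact (hsmall a hends.1).not_ge h
  · exact (hsmall b hends.2).not_ge h

lemma numCopies_starGraph_lt_sup_edge_iff [Finite β] {G : SimpleGraph β} {u v : β} (ht : 2 ≤ t)
    (huv : u ≠ v) (hnadj : ¬G.Adj u v) :
    numCopies (_root_.starGraph t) G < numCopies (_root_.starGraph t) (G ⊔ edge u v) ↔
      t - 2 ≤ (G.neighborSet u).ncard ∨ t - 2 ≤ (G.neighborSet v).ncard := by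
  refine ⟨fun hlt => ?_, ?_⟩
  · by_contra! h
    exact hlt.not_ge (numCopies_starGraph_sup_edge_le h.1 h.2)
  · rintro (h | h)
    · exact numCopies_starGraph_lt_sup_edge ht huv hnadj h
    · rw [edge_comm]
      exact numCopies_starGraph_lt_sup_edge ht huv.symm (fun h' => hnadj h'.symm) h

end Star

section HighDegree

variable {β : Type*} (k : ℕ)

def highDegreeSet (G : SimpleGraph β) : Set β :=
  {v | k ≤ (G.neighborSet v).ncard}

def joinHighDegree (G : SimpleGraph β) : SimpleGraph β :=
  G ⊔ fromRel (fun v _ => v ∈ highDegreeSet k G)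

variable {k} {G G' : SimpleGraph β} {v w : β}

lemma le_joinHighDegree : G ≤ joinHighDegree k G :=
  le_sup_left

lemma joinHighDegree_adj_of_mem (hv : v ∈ highDegreeSet k G) (hvw : v ≠ w) :
    (joinHighDegree k G).Adj v w :=
  Or.inr ⟨hvw, Or.inl hv⟩

lemma joinHighDegree_eq_self_iff :
    joinHighDegree k G = G ↔ ∀ v ∈ highDegreeSet k G, ∀ w, v ≠ w → G.Adj v w := by
  refine ⟨fun h v hv w hvw => h ▸ joinHighDegree_adj_of_mem hv hvw, fun h => sup_eq_left.2 ?_⟩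
  rintro a b ⟨hab, ha | hb⟩
  · exact h a ha b hab
  · exact (h b hb a hab.symm).symm

lemma joinHighDegree_eq_top (h : highDegreeSet k G = Set.univ) : joinHighDegree k G = ⊤ :=
  eq_top_iff.2 fun v _ hvw => joinHighDegree_adj_of_mem (h ▸ Set.mem_univ v) hvw.ne

lemma joinHighDegree_top : joinHighDegree k (⊤ : SimpleGraph β) = ⊤ :=
  top_unique le_joinHighDegree

lemma nonempty_highDegreeSet_of_joinHighDegree_ne (h : joinHighDegree k G ≠ G) :
    (highDegreeSet k G).Nonempty := by
  contrapose! h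
  simp [joinHighDegree_eq_self_iff, h]

variable [Finite β]

lemma highDegreeSet_mono (h : G ≤ G') : highDegreeSet k G ⊆ highDegreeSet k G' :=
  fun _ hv => hv.trans (Set.ncard_le_ncard fun _ hw => h hw)

/-- A vertex of low degree is joined to all of the high-degree vertices. -/
lemma highDegreeSet_joinHighDegree_eq_univ (h : k ≤ (highDegreeSet k G).ncard) :
    highDegreeSet k (joinHighDegree k G) = Set.univ := by
  refine Set.eq_univ_of_forall fun v => ?_
  by_cases hv : v ∈ highDegreeSet k G
  · exact highDegreeSet_mono le_joinHighDegree hv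
  · have hsub : highDegreeSet k G ⊆ (joinHighDegree k G).neighborSet v := fun w hw =>
      (joinHighDegree_adj_of_mem hw (ne_of_mem_of_not_mem hw hv)).symm
    exact h.trans (Set.ncard_le_ncard hsub)

/-- A vertex that is still missing an edge after one step had low degree before it. -/
lemma highDegreeSet_ssubset_of_joinHighDegree_ne
    (h : joinHighDegree k (joinHighDegree k G) ≠ joinHighDegree k G) :
    highDegreeSet k G ⊂ highDegreeSet k (joinHighDegree k G) := by
  rw [Ne, joinHighDegree_eq_self_iff] at h
  push Not at h
  obtain ⟨v, hv, w, hvw, hnadj⟩ := h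
  exact (Set.ssubset_iff_of_subset (highDegreeSet_mono le_joinHighDegree)).2
    ⟨v, hv, fun hv' => hnadj (joinHighDegree_adj_of_mem hv' hvw)⟩

lemma exists_stable_or_lt_ncard_highDegreeSet {P : ℕ → SimpleGraph β}
    (hP : ∀ i, P (i + 1) = joinHighDegree k (P i)) (i : ℕ) :
    (∃ j ≤ i, P (j + 1) = P j) ∨ i < (highDegreeSet k (P i)).ncard := by
  induction i with
  | zero =>
    by_cases h0 : P 1 = P 0
    · exact Or.inl ⟨0, le_rfl, h0⟩
    · exact Or.inr ((Set.ncard_pos).2 (nonempty_highDegreeSet_of_joinHighDegree_ne (hP 0 ▸ h0)))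
  | succ i ih =>
    by_cases hi : P (i + 2) = P (i + 1)
    · exact Or.inl ⟨i + 1, le_rfl, hi⟩
    refine ih.imp (fun ⟨j, hj, hstable⟩ => ⟨j, by omega, hstable⟩) fun hlt => ?_
    have hss := highDegreeSet_ssubset_of_joinHighDegree_ne (k := k) (G := P i)
      (by rwa [← hP, ← hP])
    rw [← hP] at hss
    have := Set.ncard_lt_ncard hss
    omega

theorem exists_le_succ_stable_of_joinHighDegree {P : ℕ → SimpleGraph β}
    (hP : ∀ i, P (i + 1) = joinHighDegree k (P i)) : ∃ j ≤ k + 1, P (j + 1) = P j := by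
  rcases k with _ | r
  · have h1 : P 1 = ⊤ := by
      rw [hP]
      exact joinHighDegree_eq_top (Set.eq_univ_of_forall fun _ => Nat.zero_le _)
    exact ⟨1, le_rfl, by rw [hP, h1, joinHighDegree_top]⟩
  · rcases exists_stable_or_lt_ncard_highDegreeSet hP r with ⟨j, hj, hstable⟩ | hlt
    · exact ⟨j, by omega, hstable⟩
    · have h2 : P (r + 2) = ⊤ := by
        rw [hP, joinHighDegree_eq_top]
        exact hP r ▸ highDegreeSet_joinHighDegree_eq_univ hlt
      exact ⟨r + 2, le_rfl, by rw [hP, h2, joinHighDegree_top]⟩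

end HighDegree

theorem bootStep_starGraph {β : Type*} [Finite β] {t : ℕ} (ht : 2 ≤ t) (G : SimpleGraph β) :
    bootStep (_root_.starGraph t) G = joinHighDegree (t - 2) G := by
  ext a b
  simp only [bootStep, joinHighDegree, highDegreeSet, sup_adj, fromRel_adj, Set.mem_ofPred_eq]
  by_cases hG : G.Adj a b
  · simp [hG]
  by_cases hab : a = b
  · simp [hab]
  change _ ∨ (a ≠ b ∧ (_ < numCopies _ (G ⊔ edge a b) ∨ _ < numCopies _ (G ⊔ edge b a))) ↔ _
  rw [numCopies_starGraph_lt_sup_edge_iff ht hab hG,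
    numCopies_starGraph_lt_sup_edge_iff ht (Ne.symm hab) (fun h => hG h.symm)]
  tauto

/-- For every `t ≥ 2` and every `n`, the star `K_{1,t−1}` satisfies
`M_{K_{1,t−1}}(n) ≤ t − 1`. -/
theorem maxRunningTime_star_le (t : ℕ) (ht : 2 ≤ t) (n : ℕ) :
    maxRunningTime (_root_.starGraph t) n ≤ t - 1 := by
  refine csSup_le ⟨_, ⊥, rfl⟩ ?_
  rintro _ ⟨G, rfl⟩
  obtain ⟨j, hj, hstable⟩ := exists_le_succ_stable_of_joinHighDegree
    (P := bootProcess (_root_.starGraph t) G) fun _ => bootStep_starGraph ht _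
  exact (Nat.sInf_le hstable.symm).trans (by omega)
end

section
/- Let T be a tree and let z ∈ V(T) be a vertex that is not a leaf. Then there exists a subset U ⊆ V(T) such that: (1) U is a vertex cover of T of minimum size; (2) no vertex of U is a leaf of T; (3) a vertex v ∈ V(T) lies in U if and only if v has a child (with respect to the root z) that is not contained in U. -/
open SimpleGraph

/-!
Decide membership from the leaves towards the root `z`: a vertex is taken iff one of its
children is not. Every edge joins a vertex to one of its children, so this is a vertex cover,
and a taken vertex other than `z` has both a parent and a child, so it is not a leaf.
Sending each taken vertex to an untaken child is injective, since a vertex has only one parent;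
this matches the taken vertices along disjoint edges, and a vertex cover must meet each of them.
-/

namespace SimpleGraph

variable {V : Type*} {G : SimpleGraph V}

theorem IsVertexCover.ncard_le_ncard_of_injOn {U W : Set V} (hW : G.IsVertexCover W)
    (f : V → V) (hadj : ∀ u ∈ U, G.Adj u (f u)) (hout : ∀ u ∈ U, f u ∉ U)
    (hinj : Set.InjOn f U) (hWfin : W.Finite := by toFinite_tac) : U.ncard ≤ W.ncard := by
  classical
  let g : V → V := fun u => if u ∈ W then u else f u
  have hmaps : Set.MapsTo g U W := by
    intro u hu
    by_cases huW : u ∈ W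
    · simp [g, huW]
    · simpa [g, huW] using hW (hadj u hu)
  have hginj : Set.InjOn g U := by
    intro u hu u' hu' he
    by_cases huW : u ∈ W <;> by_cases huW' : u' ∈ W <;>
      simp only [g, huW, huW', if_true, if_false] at he
    · exact he
    · exact absurd (he ▸ hu) (hout u' hu')
    · exact absurd (he ▸ hu') (hout u hu)
    · exact hinj hu hu' he
  exact Set.ncard_le_ncard_of_injOn g hmaps hginj hWfin

theorem ncard_neighborSet_ne_one_of_adj {u a b : V} (ha : G.Adj u a) (hb : G.Adj u b)
    (hab : a ≠ b) : (G.neighborSet u).ncard ≠ 1 := by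
  intro h
  obtain ⟨x, hx⟩ := Set.ncard_eq_one.mp h
  have ha' : a ∈ ({x} : Set V) := hx ▸ ha
  have hb' : b ∈ ({x} : Set V) := hx ▸ hb
  exact hab (ha'.trans hb'.symm)

theorem Reachable.exists_adj_dist_lt {z u : V} (hr : G.Reachable z u) (hne : u ≠ z) :
    ∃ w, G.Adj u w ∧ G.dist z w < G.dist z u := by
  obtain ⟨p, hp⟩ := hr.exists_walk_length_eq_dist
  have hnil : ¬ p.Nil := Walk.not_nil_of_ne hne.symm
  refine ⟨p.penultimate, (p.adj_penultimate hnil).symm, ?_⟩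
  have := G.dist_le p.dropLast
  have := p.length_dropLast_add_one hnil
  omega

theorem IsAcyclic.mem_support_of_adj_of_dist_lt (hG : G.IsAcyclic) {z u c : V}
    {p : G.Walk z c} (hp : p.IsPath) (hadj : G.Adj u c) (hlt : G.dist z u < G.dist z c) :
    u ∈ p.support := by
  by_contra hu
  obtain ⟨q, hq, hql⟩ := (p.reachable.trans hadj.symm.reachable).exists_path_of_dist
  have hc : c ∈ q.support := hG.mem_support_of_ne_mem_support_of_adj_of_isPath hq hp hadj hu
  have hqp := congrArg Walk.length (hG.path_concat hp hq hadj.symm hc)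
  rw [Walk.length_concat] at hqp
  have := G.dist_le p
  omega

theorem IsAcyclic.eq_of_adj_of_dist_lt (hG : G.IsAcyclic) {z u u' c : V}
    (hu : G.Adj u c) (hu' : G.Adj u' c)
    (hlt : G.dist z u < G.dist z c) (hlt' : G.dist z u' < G.dist z c) : u = u' := by
  obtain ⟨p, hp, -⟩ := (Reachable.of_dist_ne_zero (by omega : G.dist z c ≠ 0)).exists_path_of_dist
  rw [hG.eq_penultimate_of_adj_end hp hu.symm (hG.mem_support_of_adj_of_dist_lt hp hu hlt),
    hG.eq_penultimate_of_adj_end hp hu'.symm (hG.mem_support_of_adj_of_dist_lt hp hu' hlt')]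

noncomputable def InGreedyCover [Fintype V] (G : SimpleGraph V) (z v : V) : Prop :=
  ∃ w, ∃ (_ : G.Adj v w) (_ : G.dist z v < G.dist z w), ¬ G.InGreedyCover z w
termination_by Fintype.card V - G.dist z v
decreasing_by
  obtain ⟨p, hp, hl⟩ := (Reachable.of_dist_ne_zero (by omega : G.dist z w ≠ 0)).exists_path_of_dist
  have := hp.length_lt
  omega

variable [Fintype V]

theorem inGreedyCover_iff {z v : V} :
    G.InGreedyCover z v ↔ ∃ w, G.Adj v w ∧ G.dist z v < G.dist z w ∧ ¬ G.InGreedyCover z w := by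
  rw [InGreedyCover]
  simp only [exists_prop]

theorem IsTree.isVertexCover_setOf_inGreedyCover (hG : G.IsTree) (z : V) :
    G.IsVertexCover {v | G.InGreedyCover z v} := by
  intro u v huv
  rcases lt_or_gt_of_ne (hG.dist_ne_of_adj z huv) with h | h
  · by_cases hv : G.InGreedyCover z v
    · exact Or.inr hv
    · exact Or.inl (inGreedyCover_iff.mpr ⟨v, huv, h, hv⟩)
  · by_cases hu : G.InGreedyCover z u
    · exact Or.inl hu
    · exact Or.inr (inGreedyCover_iff.mpr ⟨u, huv.symm, h, hu⟩)

theorem IsAcyclic.ncard_setOf_inGreedyCover_le (hG : G.IsAcyclic) {z : V} {W : Set V}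
    (hW : G.IsVertexCover W) : {v | G.InGreedyCover z v}.ncard ≤ W.ncard := by
  choose! child hadj hlt hout using fun v (hv : G.InGreedyCover z v) => inGreedyCover_iff.mp hv
  exact hW.ncard_le_ncard_of_injOn child hadj hout fun u hu u' hu' he =>
    hG.eq_of_adj_of_dist_lt (hadj u hu) (he ▸ hadj u' hu') (hlt u hu) (he ▸ hlt u' hu')

theorem Connected.ncard_neighborSet_ne_one_of_inGreedyCover (hG : G.Connected) {z v : V}
    (hz : (G.neighborSet z).ncard ≠ 1) (hv : G.InGreedyCover z v) :
    (G.neighborSet v).ncard ≠ 1 := by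
  obtain ⟨child, hchild, hlt, -⟩ := inGreedyCover_iff.mp hv
  obtain rfl | hne := eq_or_ne v z
  · exact hz
  obtain ⟨parent, hparent, hgt⟩ := (hG z v).exists_adj_dist_lt hne
  exact ncard_neighborSet_ne_one_of_adj hparent hchild (by rintro rfl; omega)

end SimpleGraph

/-- In a tree `T` rooted at a non-leaf `z` there is a minimum vertex
cover `U` containing no leaf, such that a vertex lies in `U` iff it has a child
(w.r.t. the root `z`) outside `U`. -/
theorem exists_good_vertex_cover {V : Type} [Fintype V] (T : SimpleGraph V)
    (hT : T.IsTree) (z : V) (hz : (T.neighborSet z).ncard ≠ 1) :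
    ∃ U : Set V,
      ((∀ u v : V, T.Adj u v → u ∈ U ∨ v ∈ U) ∧
        ∀ W : Set V, (∀ u v : V, T.Adj u v → u ∈ W ∨ v ∈ W) → U.ncard ≤ W.ncard) ∧
      (∀ u ∈ U, (T.neighborSet u).ncard ≠ 1) ∧
      (∀ v : V, v ∈ U ↔ ∃ w : V, T.Adj v w ∧ T.dist z v < T.dist z w ∧ w ∉ U) :=
  ⟨{v | T.InGreedyCover z v},
    ⟨fun _ _ h => hT.isVertexCover_setOf_inGreedyCover z h,
      fun _ hW => hT.isAcyclic.ncard_setOf_inGreedyCover_le fun u v h => hW u v h⟩,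
    fun _ => hT.connected.ncard_neighborSet_ne_one_of_inGreedyCover hz,
    fun _ => inGreedyCover_iff⟩
end

section
/- Let T be a tree with root z which is not a leaf, and let U ⊆ V(T) be a set such that: U is a vertex cover of T of minimum size; no vertex of U is a leaf of T; and a vertex v ∈ V(T) lies in U if and only if v has a child (with respect to z) not contained in U. Let (G_i)_{i≥0} be a T-bootstrap process, let i₀ ∈ ℕ, let T₀ ⊆ G_{i₀} be a copy of T and let φ : T → T₀ be an isomorphism. Then in G_{i₀ + ⌈height_z(T)/2⌉}, every vertex of φ(U) is adjacent to every vertex of V(G) \ V(T₀). -/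
/-!
Let `u ∈ U` have a child `c ∉ U`, and let `w` lie outside the copy. Replacing `φ c` by `w` turns
`φ` into a copy of `T` in `G_i + φ(u)w` as soon as `w` is joined to the images of the children
of `c`, so `φ(u)w` appears one round later. The children of `c` lie in `U`, and each of them has
a child outside `U` two levels below `c`; by induction on the remaining height they are joined
to `w` one round earlier. Each round thus clears two levels, whence `⌈height_z(T)/2⌉` rounds.
-/

open SimpleGraph

/-- The height of the tree `T` with respect to the root `z`: for a tree this equals the
largest distance from `z` to a vertex. -/
noncomputable def treeHeight {V : Type*} (T : SimpleGraph V) (z : V) : ℕ :=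
  sSup {d : ℕ | ∃ v : V, T.dist z v = d}

lemma Function.Injective.update_of_notMem_range {α β : Type*} [DecidableEq α] {f : α → β}
    (hf : Function.Injective f) (a : α) {b : β} (hb : b ∉ Set.range f) :
    Function.Injective (Function.update f a b) := by
  intro x y hxy
  by_cases hx : x = a <;> by_cases hy : y = a <;>
    simp only [hx, hy, Function.update_self, ne_eq, not_false_eq_true,
      Function.update_of_ne] at hxy
  · exact hx.trans hy.symm
  · exact absurd ⟨y, hxy.symm⟩ hb
  · exact absurd ⟨x, hxy⟩ hb
  · exact hf hxy

namespace SimpleGraph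

lemma IsTree.eq_of_adj_of_dist_lt {α : Type*} {T : SimpleGraph α} (hT : T.IsTree) (z : α)
    {c u₁ u₂ : α} (h₁ : T.Adj u₁ c) (h₂ : T.Adj u₂ c)
    (hl₁ : T.dist z u₁ < T.dist z c) (hl₂ : T.dist z u₂ < T.dist z c) : u₁ = u₂ := by
  have shortest_path (u : α) (h : T.Adj u c) (hl : T.dist z u < T.dist z c) :
      ∃ p : T.Walk z u, (p.concat h).IsPath := by
    obtain ⟨p, hp⟩ := hT.connected.exists_walk_length_eq_dist z u
    refine ⟨p, (p.concat h).isPath_of_length_eq_dist ?_⟩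
    have := T.dist_le (p.concat h)
    rw [Walk.length_concat] at this ⊢
    omega
  obtain ⟨p₁, hp₁⟩ := shortest_path u₁ h₁ hl₁
  obtain ⟨p₂, hp₂⟩ := shortest_path u₂ h₂ hl₂
  have := hT.isAcyclic.subsingleton_path z c |>.elim ⟨_, hp₁⟩ ⟨_, hp₂⟩
  exact (Walk.concat_inj (Subtype.mk.inj this)).1

lemma IsTree.dist_eq_add_one_of_adj_of_ne {α : Type*} {T : SimpleGraph α} (hT : T.IsTree)
    (z : α) {u c y : α} (huc : T.Adj u c) (hlt : T.dist z u < T.dist z c) (hcy : T.Adj c y)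
    (hyu : y ≠ u) : T.dist z y = T.dist z c + 1 := by
  rcases hT.dist_eq_dist_add_one_of_adj z hcy with h | h
  · exact absurd (hT.eq_of_adj_of_dist_lt z hcy.symm huc (by omega) hlt) hyu
  · exact h

lemma bootProcess_mono {α β : Type*} (H : SimpleGraph α) (G : SimpleGraph β) :
    Monotone (bootProcess H G) :=
  monotone_nat_of_le_succ fun i => (le_sup_left : _ ≤ bootStep H (bootProcess H G i))

lemma numCopies_lt_of_copy_adj {α β : Type*} [Finite β] {H : SimpleGraph α}
    {G G' : SimpleGraph β} (hle : G ≤ G') (f : Copy H G') {x y : α} (hxy : H.Adj x y)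
    (hnew : ¬ G.Adj (f x) (f y)) : numCopies H G < numCopies H G' := by
  let ι : G.Subgraph → G'.Subgraph := fun A => A.map (Copy.ofLE G G' hle).toHom
  have hιA (A : G.Subgraph) : (ι A).verts = A.verts ∧ (ι A).Adj = A.Adj :=
    ⟨by simp [ι, Copy.ofLE], by ext; simp [ι, Copy.ofLE]⟩
  have hι : Function.Injective ι := fun A B h =>
    Subgraph.ext ((hιA A).1.symm.trans (h ▸ (hιA B).1)) ((hιA A).2.symm.trans (h ▸ (hιA B).2))
  have hmaps : ι '' {A | Nonempty (A.coe ≃g H)} ⊆ {A | Nonempty (A.coe ≃g H)} := by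
    rintro _ ⟨A, ⟨e⟩, rfl⟩
    exact ⟨((Copy.ofLE G G' hle).isoSubgraphMap A).symm.trans e⟩
  have hnotMem : f.toSubgraph ∉ ι '' {A | Nonempty (A.coe ≃g H)} := by
    rintro ⟨A, -, hA⟩
    have : (ι A).Adj (f x) (f y) := hA ▸ ⟨x, y, hxy, rfl, rfl⟩
    exact hnew (A.adj_sub ((hιA A).2 ▸ this))
  calc numCopies H G = (ι '' {A | Nonempty (A.coe ≃g H)}).ncard :=
        (Set.ncard_image_of_injective _ hι).symm
    _ < numCopies H G' :=
        Set.ncard_lt_ncard ((Set.ssubset_iff_of_subset hmaps).mpr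
          ⟨f.toSubgraph, ⟨f.isoToSubgraph.symm⟩, hnotMem⟩) (Set.toFinite _)

lemma bootStep_adj_of_copy_s12 {α β : Type*} [Finite β] {H : SimpleGraph α} {G : SimpleGraph β}
    {a b : β} (f : Copy H (G ⊔ fromEdgeSet {s(a, b)})) {x y : α} (hxy : H.Adj x y)
    (hx : f x = a) (hy : f y = b) : (bootStep H G).Adj a b := by
  by_cases hG : G.Adj a b
  · exact Or.inl hG
  have hab : a ≠ b := fun h => hxy.ne (f.injective (hx.trans (h.trans hy.symm)))
  exact Or.inr ((fromRel_adj _ _ _).mpr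
    ⟨hab, Or.inl (numCopies_lt_of_copy_adj le_sup_left f hxy (by rwa [hx, hy]))⟩)

lemma bootStep_adj_of_update {α β : Type*} [Finite β] [DecidableEq α] {H : SimpleGraph α}
    {G : SimpleGraph β} {φ : α → β} (hφinj : Function.Injective φ)
    (hφhom : ∀ x y, H.Adj x y → G.Adj (φ x) (φ y)) {u c : α} (huc : H.Adj u c) {w : β}
    (hw : w ∉ Set.range φ) (hnbr : ∀ y, H.Adj c y → y ≠ u → G.Adj (φ y) w) :
    (bootStep H G).Adj (φ u) w := by
  set ψ := Function.update φ c w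
  have hψc : ψ c = w := Function.update_self c w φ
  have hψ (x : α) (hx : x ≠ c) : ψ x = φ x := Function.update_of_ne hx w φ
  have hwy (y : α) (hcy : H.Adj c y) : (G ⊔ fromEdgeSet {s(φ u, w)}).Adj w (ψ y) := by
    rw [hψ y hcy.ne']
    by_cases hyu : y = u
    · subst hyu
      exact Or.inr ⟨Sym2.eq_swap, fun h => hw ⟨y, h.symm⟩⟩
    · exact Or.inl (hnbr y hcy hyu).symm
  have hψhom (x y : α) (hxy : H.Adj x y) : (G ⊔ fromEdgeSet {s(φ u, w)}).Adj (ψ x) (ψ y) := by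
    by_cases hx : x = c
    · subst hx; exact hψc ▸ hwy y hxy
    by_cases hy : y = c
    · subst hy; exact hψc ▸ (hwy x hxy.symm).symm
    rw [hψ x hx, hψ y hy]
    exact Or.inl (hφhom x y hxy)
  exact bootStep_adj_of_copy_s12 ⟨⟨ψ, hψhom _ _⟩, hφinj.update_of_notMem_range c hw⟩ huc
    (hψ u huc.ne) hψc

lemma dist_le_treeHeight {α : Type*} [Finite α] (T : SimpleGraph α) (z v : α) :
    T.dist z v ≤ treeHeight T z :=
  le_csSup (Set.finite_range (T.dist z)).bddAbove ⟨v, rfl⟩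

section CoverImage

variable {α β : Type*} {T : SimpleGraph α} {z : α} {U : Set α}

lemma exists_grandchild_notMem (hT : T.IsTree)
    (hchild : ∀ v, v ∈ U ↔ ∃ w, T.Adj v w ∧ T.dist z v < T.dist z w ∧ w ∉ U)
    {u c y : α} (huc : T.Adj u c) (hlt : T.dist z u < T.dist z c) (hc : c ∉ U)
    (hcy : T.Adj c y) (hyu : y ≠ u) :
    ∃ x, T.Adj y x ∧ T.dist z y < T.dist z x ∧ x ∉ U ∧ T.dist z x = T.dist z c + 2 := by
  have hdy := hT.dist_eq_add_one_of_adj_of_ne z huc hlt hcy hyu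
  have hyU : y ∈ U := by
    by_contra hyU
    exact hc ((hchild c).2 ⟨y, hcy, by omega, hyU⟩)
  obtain ⟨x, hyx, hltx, hx⟩ := (hchild y).1 hyU
  have := hT.dist_eq_dist_add_one_of_adj z hyx
  exact ⟨x, hyx, hltx, hx, by omega⟩

lemma bootProcess_adj_of_child_notMem [Finite α] [Finite β] (hT : T.IsTree)
    (hchild : ∀ v, v ∈ U ↔ ∃ w, T.Adj v w ∧ T.dist z v < T.dist z w ∧ w ∉ U)
    {G : SimpleGraph β} {i₀ : ℕ} {φ : α → β} (hφinj : Function.Injective φ)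
    (hφhom : ∀ x y, T.Adj x y → (bootProcess T G i₀).Adj (φ x) (φ y)) (m : ℕ) {u c : α}
    (huc : T.Adj u c) (hlt : T.dist z u < T.dist z c) (hc : c ∉ U)
    (hm : treeHeight T z ≤ T.dist z c + 2 * m + 1) {w : β} (hw : w ∉ Set.range φ) :
    (bootProcess T G (i₀ + m + 1)).Adj (φ u) w := by
  classical
  have hφhom' (n : ℕ) (x y : α) (hxy : T.Adj x y) :
      (bootProcess T G (i₀ + n)).Adj (φ x) (φ y) :=
    bootProcess_mono T G (Nat.le_add_right i₀ n) (hφhom x y hxy)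
  induction m generalizing u c with
  | zero =>
    refine bootStep_adj_of_update hφinj (hφhom' 0) huc hw fun y hcy hyu => ?_
    obtain ⟨x, -, -, -, hdx⟩ := exists_grandchild_notMem hT hchild huc hlt hc hcy hyu
    have := dist_le_treeHeight T z x
    omega
  | succ m ih =>
    refine bootStep_adj_of_update hφinj (hφhom' (m + 1)) huc hw fun y hcy hyu => ?_
    obtain ⟨x, hyx, hltx, hx, hdx⟩ := exists_grandchild_notMem hT hchild huc hlt hc hcy hyu
    exact ih hyx hltx hx (by omega)

end CoverImage

end SimpleGraph

theorem cover_image_almost_universal_general {α V : Type} [Fintype α] [Fintype V]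
    (T : SimpleGraph α) (hT : T.IsTree) (z : α)
    (U : Set α)
    (hchild : ∀ v : α, v ∈ U ↔ ∃ w : α, T.Adj v w ∧ T.dist z v < T.dist z w ∧ w ∉ U)
    (G : SimpleGraph V) (i₀ : ℕ) (φ : α → V)
    (hφinj : Function.Injective φ)
    (hφhom : ∀ u v : α, T.Adj u v → (bootProcess T G i₀).Adj (φ u) (φ v)) :
    ∀ u ∈ U, ∀ w : V, w ∉ Set.range φ →
      (bootProcess T G (i₀ + (treeHeight T z + 1) / 2)).Adj (φ u) w := by
  intro u hu w hw
  obtain ⟨c, huc, hlt, hc⟩ := (hchild u).1 hu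
  have hcH := dist_le_treeHeight T z c
  have hadj := bootProcess_adj_of_child_notMem hT hchild hφinj hφhom
    ((treeHeight T z - T.dist z c) / 2) huc hlt hc (by omega) hw
  exact bootProcess_mono T G (by omega) hadj

/-- Let `T` be a tree rooted at a non-leaf `z` and let `U` be a
minimum vertex cover of `T` containing no leaf such that `v ∈ U` iff `v` has a child
outside `U`. If `φ` embeds `T` as a subgraph `T₀` of `G_{i₀}` in a `T`-bootstrap
process, then at time `i₀ + ⌈height_z(T)/2⌉` every vertex of `φ(U)` is adjacent to
every vertex outside `V(T₀)`. -/
theorem cover_image_almost_universal {α V : Type} [Fintype α] [Fintype V]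
    (T : SimpleGraph α) (hT : T.IsTree) (z : α) (hz : (T.neighborSet z).ncard ≠ 1)
    (U : Set α)
    (hcover : ∀ u v : α, T.Adj u v → u ∈ U ∨ v ∈ U)
    (hmincover : ∀ W : Set α, (∀ u v : α, T.Adj u v → u ∈ W ∨ v ∈ W) → U.ncard ≤ W.ncard)
    (hnoleaf : ∀ u ∈ U, (T.neighborSet u).ncard ≠ 1)
    (hchild : ∀ v : α, v ∈ U ↔ ∃ w : α, T.Adj v w ∧ T.dist z v < T.dist z w ∧ w ∉ U)
    (G : SimpleGraph V) (i₀ : ℕ) (φ : α → V)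
    (hφinj : Function.Injective φ)
    (hφhom : ∀ u v : α, T.Adj u v → (bootProcess T G i₀).Adj (φ u) (φ v)) :
    ∀ u ∈ U, ∀ w : V, w ∉ Set.range φ →
      (bootProcess T G (i₀ + (treeHeight T z + 1) / 2)).Adj (φ u) w :=
  cover_image_almost_universal_general T hT z U hchild G i₀ φ hφinj hφhom
end
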